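/- Let X and Y be complex Banach spaces, A ∈ B(X), B ∈ B(Y), C ∈ B(Y, X), and let M_C ∈ B(X ⊕ Y) be the upper-triangular operator matrix M_C(x, y) = (Ax + Cy, By). Then σ_su(B) ⊆ σ_su(M_C) ⊆ σ_su(A) ∪ σ_su(B); moreover the set W_{σ_su}(A,B,C) := (σ_su(A) ∪ σ_su(B)) \ σ_su(M_C) satisfies W_{σ_su}(A,B,C) ⊆ (σ_su(A) ∩ σ_a(B)) \ σ_su(B) and W_{σ_su}(A,B,C) ⊆ η(σ_su(B)), where σ_su is the defect (surjectivity) spectrum, σ_a the approximate point spectrum and η the polynomially convex hull. -/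

import Mathlib

noncomputable section

open ContinuousLinearMap Metric Set

variable {E : Type*} [NormedAddCommGroup E] [NormedSpace ℂ E]
variable {X Y : Type*} [NormedAddCommGroup X] [NormedSpace ℂ X] [CompleteSpace X]
  [NormedAddCommGroup Y] [NormedSpace ℂ Y] [CompleteSpace Y]

/-- The defect (surjectivity) spectrum: points where `T - z` is not surjective. -/
def surjSpectrum (T : E →L[ℂ] E) : Set ℂ :=
  {z | ¬ Function.Surjective ⇑(T - z • (1 : E →L[ℂ] E))}

/-- The approximate point spectrum: points where `T - z` is not bounded below
(injective with closed range). -/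
def apSpectrum (T : E →L[ℂ] E) : Set ℂ :=
  {z | ¬ (Function.Injective ⇑(T - z • (1 : E →L[ℂ] E)) ∧
      IsClosed (LinearMap.range ((T - z • (1 : E →L[ℂ] E)) : E →ₗ[ℂ] E) : Set E))}

/-- The polynomially convex hull of a set `M ⊆ ℂ`. -/
def polyHull (M : Set ℂ) : Set ℂ :=
  {w | ∀ p : Polynomial ℂ, ∀ m : ℝ, (∀ z ∈ M, ‖p.eval z‖ ≤ m) → ‖p.eval w‖ ≤ m}

/-- The upper-triangular operator matrix `M_C (x, y) = (A x + C y, B y)` on `X ⊕ Y`. -/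
def ucMat (A : X →L[ℂ] X) (B : Y →L[ℂ] Y) (C : Y →L[ℂ] X) :
    (X × Y) →L[ℂ] (X × Y) :=
  (A.comp (ContinuousLinearMap.fst ℂ X Y) + C.comp (ContinuousLinearMap.snd ℂ X Y)).prod
    (B.comp (ContinuousLinearMap.snd ℂ X Y))

/-
Everything except the polynomial-hull inclusion is bookkeeping with the two coordinates of
`M_C - z = [[A - z, C], [0, B - z]]`; in particular a point `z` of `W_{σ_su}` makes `B - z`
surjective but not injective (otherwise `A - z` would inherit surjectivity from `M_C - z`), so
`z ∈ σ(B)`. By the maximum modulus principle `σ(B)` lies in the polynomially convex hull of its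
boundary, and the boundary lies in `σ_su(B)`: if `B - z` were surjective at a boundary point,
open-mapping bounds for preimages would persist under the small perturbations `B - w`
(`w ∉ σ(B)`), and would force `B - z` to be injective as well.
-/

open Function

namespace ContinuousLinearMap

variable {𝕜 F G : Type*} [NontriviallyNormedField 𝕜] [NormedAddCommGroup F] [NormedSpace 𝕜 F]
  [CompleteSpace F] [NormedAddCommGroup G] [NormedSpace 𝕜 G]

theorem exists_preimage_norm_le_of_norm_sub_lt {S V : F →L[𝕜] G} (R : S.NonlinearRightInverse)
    (hVS : ‖V - S‖ < (R.nnnorm : ℝ)⁻¹) (y : G) :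
    ∃ x, V x = y ∧ ‖x‖ ≤ ((R.nnnorm : ℝ)⁻¹ - ‖V - S‖)⁻¹ * ‖y‖ := by
  have happrox : ApproximatesLinearOn V S Set.univ ‖V - S‖₊ := fun a _ b _ => by
    simpa [← map_sub] using (V - S).le_opNorm (a - b)
  have hgap : 0 < (R.nnnorm : ℝ)⁻¹ - ‖V - S‖ := sub_pos.2 hVS
  obtain ⟨x, hx, rfl⟩ := happrox.surjOn_closedBall_of_nonlinearRightInverse R (b := 0)
    (ε := ((R.nnnorm : ℝ)⁻¹ - ‖V - S‖)⁻¹ * ‖y‖) (by positivity) (Set.subset_univ _)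
    (show y ∈ _ by simp [mul_inv_cancel_left₀ hgap.ne'])
  exact ⟨x, rfl, by simpa using hx⟩

theorem notMem_spectrum_iff_bijective {T : F →L[𝕜] F} {z : 𝕜} :
    z ∉ spectrum 𝕜 T ↔ Bijective (T - z • (1 : F →L[𝕜] F)) := by
  rw [spectrum.notMem_iff, ← IsUnit.neg_iff, neg_sub, Algebra.algebraMap_eq_smul_one,
    isUnit_iff_bijective]

theorem not_surjective_sub_smul_of_mem_frontier_spectrum {T : F →L[𝕜] F} {z : 𝕜}
    (hz : z ∈ frontier (spectrum 𝕜 T)) : ¬ Surjective (T - z • (1 : F →L[𝕜] F)) := by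
  intro hsurj
  obtain ⟨R, hR⟩ := exists_nonlinearRightInverse_of_surjective _ (LinearMap.range_eq_top.2 hsurj)
  set r : ℝ := (R.nnnorm : ℝ)⁻¹
  have hr : 0 < r := inv_pos.2 hR
  have hz' : z ∈ closure (spectrum 𝕜 T)ᶜ := frontier_subset_closure (by rwa [frontier_compl])
  obtain ⟨w, hw, hzw⟩ := Metric.mem_closure_iff.1 hz' (r / 2) (by positivity)
  rw [dist_eq_norm] at hzw
  have hdiff : (T - w • 1) - (T - z • 1) = (z - w) • 1 := by rw [sub_smul]; abel
  have hVS : ‖(T - w • 1) - (T - z • 1)‖ ≤ ‖z - w‖ := by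
    rw [hdiff]
    exact (norm_smul_le _ _).trans (mul_le_of_le_one_right (norm_nonneg _) norm_id_le)
  refine notMem_spectrum_iff_bijective.2 ⟨?_, hsurj⟩ ((spectrum.isClosed T).frontier_subset hz)
  -- a kernel vector `x` of `T - z` is the unique preimage of `(z - w) • x` under `T - w`, so the
  -- preimage bound gives `‖x‖ ≤ q * ‖x‖` with `q < 1`
  refine (injective_iff_map_eq_zero _).2 fun x hx => ?_
  obtain ⟨x', hx', hbound⟩ :=
    exists_preimage_norm_le_of_norm_sub_lt (V := T - w • 1) R (by linarith) ((z - w) • x)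
  obtain rfl : x' = x := (notMem_spectrum_iff_bijective.1 hw).1 <| by
    rw [hx', ← sub_add_cancel (T - w • 1) (T - z • 1), hdiff]
    simp [hx]
  have hq : (r - ‖(T - w • 1) - (T - z • 1)‖)⁻¹ * ‖z - w‖ < 1 := by
    rw [inv_mul_lt_one₀ (by linarith)]
    linarith
  rw [norm_smul, ← mul_assoc] at hbound
  exact norm_eq_zero.1 (by nlinarith [norm_nonneg x'])

end ContinuousLinearMap

theorem frontier_spectrum_subset_surjSpectrum [CompleteSpace E] (T : E →L[ℂ] E) :
    frontier (spectrum ℂ T) ⊆ surjSpectrum T :=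
  fun _ hz => ContinuousLinearMap.not_surjective_sub_smul_of_mem_frontier_spectrum hz

theorem polyHull_mono {M N : Set ℂ} (h : M ⊆ N) : polyHull M ⊆ polyHull N :=
  fun _ hw p m hp => hw p m fun z hz => hp z (h hz)

theorem subset_polyHull_frontier {K : Set ℂ} (hK : Bornology.IsBounded K) :
    K ⊆ polyHull (frontier K) :=
  fun _ hw p _ hp => Complex.norm_le_of_forall_mem_frontier_norm_le hK
    p.differentiable.diffContOnCl hp (subset_closure hw)

section UpperTriangular

omit [CompleteSpace X] [CompleteSpace Y]

variable (A : X →L[ℂ] X) (B : Y →L[ℂ] Y) (C : Y →L[ℂ] X) (z : ℂ)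

theorem ucMat_sub_smul_apply (x : X) (y : Y) :
    (ucMat A B C - z • (1 : (X × Y) →L[ℂ] (X × Y))) (x, y) =
      (A x + C y - z • x, B y - z • y) := by
  simp [ucMat]

theorem surjSpectrum_subset_surjSpectrum_ucMat : surjSpectrum B ⊆ surjSpectrum (ucMat A B C) := by
  intro z hB hM
  refine hB fun v => ?_
  obtain ⟨⟨x, y⟩, hxy⟩ := hM (0, v)
  rw [ucMat_sub_smul_apply] at hxy
  exact ⟨y, by simpa using congrArg Prod.snd hxy⟩

theorem surjSpectrum_ucMat_subset :
    surjSpectrum (ucMat A B C) ⊆ surjSpectrum A ∪ surjSpectrum B := by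
  intro z hM
  by_contra hAB
  simp only [mem_union, surjSpectrum, mem_ofPred_eq, not_or, not_not] at hAB
  refine hM fun ⟨u, v⟩ => ?_
  obtain ⟨y, hy⟩ := hAB.2 v
  obtain ⟨x, hx⟩ := hAB.1 (u - C y)
  refine ⟨(x, y), ?_⟩
  simp only [sub_apply, smul_apply, one_apply_eq_self] at hx hy
  rw [ucMat_sub_smul_apply, ← hy, ← sub_add_cancel u (C y), ← hx]
  abel_nf

theorem surjective_sub_smul_of_surjective_ucMat_sub_smul_of_injective
    (hM : Surjective (ucMat A B C - z • (1 : (X × Y) →L[ℂ] (X × Y))))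
    (hB : Injective (B - z • (1 : Y →L[ℂ] Y))) :
    Surjective (A - z • (1 : X →L[ℂ] X)) := by
  intro u
  obtain ⟨⟨x, y⟩, hxy⟩ := hM (u, 0)
  rw [ucMat_sub_smul_apply, Prod.mk.injEq] at hxy
  obtain rfl : y = 0 := hB (by simpa using hxy.2)
  exact ⟨x, by simpa [sub_eq_add_neg, add_comm] using hxy.1⟩

end UpperTriangular

theorem stmt19 (A : X →L[ℂ] X) (B : Y →L[ℂ] Y) (C : Y →L[ℂ] X) :
    surjSpectrum B ⊆ surjSpectrum (ucMat A B C) ∧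
      surjSpectrum (ucMat A B C) ⊆ surjSpectrum A ∪ surjSpectrum B ∧
      (surjSpectrum A ∪ surjSpectrum B) \ surjSpectrum (ucMat A B C) ⊆
        (surjSpectrum A ∩ apSpectrum B) \ surjSpectrum B ∧
      (surjSpectrum A ∪ surjSpectrum B) \ surjSpectrum (ucMat A B C) ⊆
        polyHull (surjSpectrum B) := by
  have hBM := surjSpectrum_subset_surjSpectrum_ucMat A B C
  have hW : ∀ z ∈ (surjSpectrum A ∪ surjSpectrum B) \ surjSpectrum (ucMat A B C),
      z ∈ surjSpectrum A ∧ z ∉ surjSpectrum B ∧ ¬ Injective (B - z • (1 : Y →L[ℂ] Y)) := by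
    rintro z ⟨hAB, hM⟩
    have hB : z ∉ surjSpectrum B := fun h => hM (hBM h)
    have hA : z ∈ surjSpectrum A := hAB.resolve_right hB
    exact ⟨hA, hB, fun hinj => hA <|
      surjective_sub_smul_of_surjective_ucMat_sub_smul_of_injective A B C z (not_not.1 hM) hinj⟩
  refine ⟨hBM, surjSpectrum_ucMat_subset A B C, fun z hz => ?_, fun z hz => ?_⟩
  · obtain ⟨hA, hB, hinj⟩ := hW z hz
    exact ⟨⟨hA, fun h => hinj h.1⟩, hB⟩
  · obtain ⟨-, -, hinj⟩ := hW z hz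
    have hσ : z ∈ spectrum ℂ B := by
      by_contra h
      exact hinj (ContinuousLinearMap.notMem_spectrum_iff_bijective.1 h).1
    exact polyHull_mono (frontier_spectrum_subset_surjSpectrum B)
      (subset_polyHull_frontier (spectrum.isBounded B) hσ)
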